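/- Let k ≥ 1, let B ≥ 4 be a real number, and let X = (x_i)_{i=1}^N be a (finite or infinite) sequence of nonzero points in [0,1]^k. Define v_i := B^{2^i}·x_i/‖x_i‖₁ for each i, and let D be the probability distribution on ℝ_{≥0}^k assigning probability B^{−2^i} to v_i for each i and the remaining probability 1 − ∑_{i=1}^N B^{−2^i} to the zero vector. Then for every incentive-compatible, individually rational mechanism M = (q,p): ∑_{i=1}^N B^{−2^i}·p(v_i)·1[q(v_i) is parallel to v_i] ≤ AlignGap(X) + 1/B. -/

import Mathlib

open scoped BigOperators ENNReal NNReal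

noncomputable section

namespace Stmt18

/-- Valuation / allocation vectors over `k` items. -/
abbrev V (k : ℕ) := Fin k → ℝ

/-- Dot product. -/
def dot {k : ℕ} (x y : V k) : ℝ := ∑ t, x t * y t

/-- ℓ¹ norm. -/
def norm1 {k : ℕ} (x : V k) : ℝ := ∑ t, |x t|

/-- Valid index set of a sequence of length `N` (finite or `⊤`), indices starting at 1. -/
def idx (N : ℕ∞) : Set ℕ := {i | 1 ≤ i ∧ (i : ℕ∞) ≤ N}

/-- `sgap_i^{X,C} := min_{0 ≤ j < i} x_i·(c_i x_i − c_j x_j)` (with `c_0 = 0`,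
so the `j = 0` term encodes `x_0 := 0`). -/
def sgapS {k : ℕ} (S : Set ℕ) (X : ℕ → V k) (c : ℕ → ℝ) (i : ℕ) : ℝ :=
  sInf {y | ∃ j : ℕ, (j ∈ S ∨ j = 0) ∧ j < i ∧ y = dot (X i) (c i • X i - c j • X j)}

/-- `AlignGap(X,C) := ∑_i max{0, sgap_i^{X,C}}/‖x_i‖₁` in `ℝ≥0∞`. -/
def alignGapE {k : ℕ} (S : Set ℕ) (X : ℕ → V k) (c : ℕ → ℝ) : ℝ≥0∞ :=
  ∑' i : ℕ, S.indicator (fun i => ENNReal.ofReal (max 0 (sgapS S X c i) / norm1 (X i))) i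

/-- An admissible scalar sequence: `c_0 = 0` and `c_i ∈ [0, 1/‖x_i‖_∞]` for valid `i`. -/
def admissibleC {k : ℕ} (S : Set ℕ) (X : ℕ → V k) (c : ℕ → ℝ) : Prop :=
  c 0 = 0 ∧ ∀ i ∈ S, c i ∈ Set.Icc (0:ℝ) (1 / ‖X i‖)

/-- Two vectors are parallel: one is a nonnegative multiple of the other. -/
def parallel {k : ℕ} (u v : V k) : Prop := ∃ c : ℝ, 0 ≤ c ∧ (u = c • v ∨ v = c • u)

/-! Fix the coefficients `c_i` so that `q(v_i) = c_i x_i` whenever `q(v_i)` is parallel to `v_i`,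
and `c_i = 0` otherwise; these are admissible because `‖q(v_i)‖_∞ ≤ 1`. If `v_i` is aligned,
comparing it with each `v_j` (`j < i`) by incentive compatibility bounds `p(v_i)` by
`B^{2^i} x_i·(c_i x_i − c_j x_j)/‖x_i‖₁ + p(v_j)`, so the minimum `sgap_i` appears, and `p(v_j) ≤ ‖v_j‖₁ = B^{2^j}` by individual
rationality (for `j = 0`, individual rationality at `v_i` alone suffices). Since
`B^{2^j} ≤ B^{2^{i-1}} = B^{2^i} / B^{2^{i-1}}`, weighting by `B^{-2^i}` leaves an error of at most
`B^{-2^{i-1}}` per index, and these errors sum to at most `1/B`. -/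

lemma dot_eq_dotProduct {k : ℕ} (x y : V k) : dot x y = x ⬝ᵥ y := rfl

lemma dot_nonneg {k : ℕ} {x y : V k} (hx : ∀ t, 0 ≤ x t) (hy : ∀ t, 0 ≤ y t) :
    0 ≤ dot x y :=
  Finset.sum_nonneg fun t _ => mul_nonneg (hx t) (hy t)

lemma dot_le_norm1 {k : ℕ} {x y : V k} (hx : ∀ t, 0 ≤ x t) (hy : ∀ t, y t ≤ 1) :
    dot x y ≤ norm1 x :=
  Finset.sum_le_sum fun t _ => calc
    x t * y t ≤ x t := mul_le_of_le_one_right (hx t) (hy t)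
    _ ≤ |x t| := le_abs_self _

lemma norm1_pos {k : ℕ} {x : V k} (hx : x ≠ 0) : 0 < norm1 x := by
  obtain ⟨t, ht⟩ := Function.ne_iff.1 hx
  exact Finset.sum_pos' (fun t _ => abs_nonneg _) ⟨t, Finset.mem_univ t, abs_pos.2 ht⟩

lemma norm1_nonneg {k : ℕ} (x : V k) : 0 ≤ norm1 x :=
  Finset.sum_nonneg fun t _ => abs_nonneg (x t)

lemma div_norm1_smul_nonneg {k : ℕ} {x : V k} (hx : ∀ t, 0 ≤ x t) {a : ℝ} (ha : 0 ≤ a) (t : Fin k) :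
    0 ≤ ((a / norm1 x) • x) t :=
  mul_nonneg (div_nonneg ha (norm1_nonneg x)) (hx t)

lemma norm1_div_norm1_smul {k : ℕ} {x : V k} (hx : x ≠ 0) {a : ℝ} (ha : 0 ≤ a) :
    norm1 ((a / norm1 x) • x) = a := by
  have hdiv : 0 ≤ a / norm1 x := div_nonneg ha (norm1_nonneg x)
  change ∑ t, |a / norm1 x * x t| = a
  simp only [abs_mul, abs_of_nonneg hdiv, ← Finset.mul_sum]
  exact div_mul_cancel₀ a (norm1_pos hx).ne'

lemma parallel.exists_nonneg_smul {k : ℕ} {u v : V k} (h : parallel u v) (hv : v ≠ 0) :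
    ∃ a : ℝ, 0 ≤ a ∧ u = a • v := by
  obtain ⟨d, hd, rfl | rfl⟩ := h
  · exact ⟨d, hd, rfl⟩
  · have hd0 : d ≠ 0 := by rintro rfl; exact hv (zero_smul ℝ u)
    exact ⟨d⁻¹, inv_nonneg.2 hd, (inv_smul_smul₀ hd0 u).symm⟩

/-- For `x ≠ 0`, the condition holds exactly when `u` is a nonnegative multiple of `x`. -/
def coeffAlong {k : ℕ} (u x : V k) : ℝ := if u = (‖u‖ / ‖x‖) • x then ‖u‖ / ‖x‖ else 0

lemma coeffAlong_mem_Icc {k : ℕ} {u : V k} (hu : ‖u‖ ≤ 1) (x : V k) :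
    coeffAlong u x ∈ Set.Icc (0 : ℝ) (1 / ‖x‖) := by
  unfold coeffAlong
  split_ifs
  · exact ⟨by positivity, div_le_div_of_nonneg_right hu (norm_nonneg x)⟩
  · exact ⟨le_rfl, by positivity⟩

lemma coeffAlong_mul_dot_le {k : ℕ} {u x y : V k} (hu : ∀ t, 0 ≤ u t) (hy : ∀ t, 0 ≤ y t) :
    coeffAlong u x * dot y x ≤ dot y u := by
  unfold coeffAlong
  split_ifs with h
  · conv_rhs => rw [h]
    rw [dot_eq_dotProduct, dot_eq_dotProduct, dotProduct_smul, smul_eq_mul]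
  · rw [zero_mul]
    exact dot_nonneg hy hu

lemma parallel.eq_coeffAlong_smul {k : ℕ} {u x : V k} {α : ℝ} (hα : 0 < α) (hx : x ≠ 0)
    (h : parallel u (α • x)) : u = coeffAlong u x • x := by
  obtain ⟨a, ha, rfl⟩ := h.exists_nonneg_smul (smul_ne_zero hα.ne' hx)
  have hcoeff : ‖a • α • x‖ / ‖x‖ = a * α := by
    rw [smul_smul, norm_smul, Real.norm_of_nonneg (by positivity),
      mul_div_cancel_right₀ _ (norm_ne_zero_iff.2 hx)]
  rw [coeffAlong, hcoeff, smul_smul, if_pos rfl]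

structure IsMechanism {k : ℕ} (q : V k → V k) (p : V k → ℝ) : Prop where
  alloc_mem : ∀ u t, q u t ∈ Set.Icc (0 : ℝ) 1
  ic : ∀ u u' : V k, (∀ t, 0 ≤ u t) → (∀ t, 0 ≤ u' t) → dot u (q u') - p u' ≤ dot u (q u) - p u
  ir : ∀ u : V k, (∀ t, 0 ≤ u t) → 0 ≤ dot u (q u) - p u

namespace IsMechanism

variable {k : ℕ} {q : V k → V k} {p : V k → ℝ}

lemma alloc_nonneg (M : IsMechanism q p) (u : V k) (t : Fin k) : 0 ≤ q u t :=
  (M.alloc_mem u t).1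

lemma norm_alloc_le_one (M : IsMechanism q p) (u : V k) : ‖q u‖ ≤ 1 :=
  (pi_norm_le_iff_of_nonneg zero_le_one).2 fun t =>
    (Real.norm_of_nonneg (M.alloc_nonneg u t)).trans_le (M.alloc_mem u t).2

lemma payment_le_dot (M : IsMechanism q p) {u : V k} (hu : ∀ t, 0 ≤ u t) :
    p u ≤ dot u (q u) := by
  linarith [M.ir u hu]

lemma payment_le_norm1 (M : IsMechanism q p) {u : V k} (hu : ∀ t, 0 ≤ u t) :
    p u ≤ norm1 u :=
  (M.payment_le_dot hu).trans (dot_le_norm1 hu fun t => (M.alloc_mem u t).2)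

lemma payment_le_dot_sub_add (M : IsMechanism q p) {u w z : V k} (hu : ∀ t, 0 ≤ u t)
    (hw : ∀ t, 0 ≤ w t) (hz : dot u z ≤ dot u (q w)) : p u ≤ dot u (q u - z) + p w := by
  rw [dot_eq_dotProduct, dotProduct_sub, ← dot_eq_dotProduct, ← dot_eq_dotProduct]
  linarith [M.ic u w hu hw]

end IsMechanism

/-- Vanishes for `i ≤ 1`: the only earlier index is then `0`, against which individual
rationality alone bounds the payment. -/
def slack (B : ℝ) (i : ℕ) : ℝ := if 2 ≤ i then (B ^ 2 ^ (i - 1))⁻¹ else 0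

lemma slack_nonneg {B : ℝ} (hB : 0 ≤ B) (i : ℕ) : 0 ≤ slack B i := by
  unfold slack
  split_ifs <;> positivity

lemma pow_two_pow_le_mul_slack {B : ℝ} (hB : 1 ≤ B) {i j : ℕ} (hj : 1 ≤ j) (hji : j < i) :
    B ^ 2 ^ j ≤ B ^ 2 ^ i * slack B i := by
  have hsq : B ^ 2 ^ i = B ^ 2 ^ (i - 1) * B ^ 2 ^ (i - 1) := by
    rw [← pow_add, ← two_mul, ← pow_succ', Nat.sub_add_cancel (by omega)]
  have hpos : B ^ 2 ^ (i - 1) ≠ 0 := by positivity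
  rw [slack, if_pos (by omega), hsq, mul_inv_cancel_right₀ hpos]
  exact pow_le_pow_right₀ hB (Nat.pow_le_pow_right two_pos (by omega))

lemma tsum_slack_le {B : ℝ} (hB : 2 ≤ B) :
    ∑' i, ENNReal.ofReal (slack B i) ≤ ENNReal.ofReal (1 / B) := by
  have hB0 : 0 < B := by linarith
  have hr : B⁻¹ < 1 := inv_lt_one_of_one_lt₀ (by linarith)
  have hgeom : Summable fun n : ℕ => B⁻¹ ^ 2 * B⁻¹ ^ n :=
    (summable_geometric_of_lt_one (by positivity) hr).mul_left _
  have hslack_le (n : ℕ) : slack B (n + 2) ≤ B⁻¹ ^ 2 * B⁻¹ ^ n := by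
    have hexp : n + 2 ≤ 2 ^ (n + 1) := Nat.lt_two_pow_self
    rw [slack, if_pos (by omega), show n + 2 - 1 = n + 1 by omega, ← pow_add, inv_pow,
      add_comm 2 n]
    exact inv_anti₀ (by positivity) (pow_le_pow_right₀ (by linarith) hexp)
  have hsum : ∑' n : ℕ, B⁻¹ ^ 2 * B⁻¹ ^ n ≤ 1 / B := by
    rw [tsum_mul_left, tsum_geometric_of_lt_one (by positivity) hr,
      show B⁻¹ ^ 2 * (1 - B⁻¹)⁻¹ = B⁻¹ * (B - 1)⁻¹ by field_simp, one_div]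
    exact mul_le_of_le_one_right (by positivity) (inv_le_one_of_one_le₀ (by linarith))
  have hhead : ∑ i ∈ Finset.range 2, ENNReal.ofReal (slack B i) = 0 :=
    Finset.sum_eq_zero fun i hi => by
      rw [slack, if_neg (by simp only [Finset.mem_range] at hi; omega), ENNReal.ofReal_zero]
  rw [← ENNReal.summable.sum_add_tsum_nat_add' (k := 2), hhead, zero_add]
  calc ∑' n, ENNReal.ofReal (slack B (n + 2))
      ≤ ∑' n : ℕ, ENNReal.ofReal (B⁻¹ ^ 2 * B⁻¹ ^ n) :=
        ENNReal.tsum_le_tsum fun n => ENNReal.ofReal_le_ofReal (hslack_le n)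
    _ = ENNReal.ofReal (∑' n : ℕ, B⁻¹ ^ 2 * B⁻¹ ^ n) :=
        (ENNReal.ofReal_tsum_of_nonneg (fun n => by positivity) hgeom).symm
    _ ≤ ENNReal.ofReal (1 / B) := ENNReal.ofReal_le_ofReal hsum

lemma le_sgapS {k : ℕ} {S : Set ℕ} {X : ℕ → V k} {c : ℕ → ℝ} {i : ℕ} {a : ℝ} (hi : 1 ≤ i)
    (h : ∀ j, (j ∈ S ∨ j = 0) → j < i → a ≤ dot (X i) (c i • X i - c j • X j)) :
    a ≤ sgapS S X c i :=
  le_csInf ⟨_, 0, Or.inr rfl, hi, rfl⟩ fun _ ⟨j, hj, hji, hy⟩ => hy ▸ h j hj hji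

/-- The witness `C` for `AlignGap(X)`: `q(v_i) = c_i x_i` whenever `q(v_i)` is parallel to
`v_i`. -/
def alignCoeff {k : ℕ} (N : ℕ∞) (X : ℕ → V k) (q : V k → V k) (v : ℕ → V k) : ℕ → ℝ :=
  (idx N).indicator fun i => coeffAlong (q (v i)) (X i)

section AlignedRevenue

variable {k : ℕ} {B : ℝ} {N : ℕ∞} {X v : ℕ → V k} {q : V k → V k} {p : V k → ℝ}

lemma zero_notMem_idx (N : ℕ∞) : 0 ∉ idx N := fun h => absurd h.1 (by norm_num)

lemma alignCoeff_zero : alignCoeff N X q v 0 = 0 :=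
  Set.indicator_of_notMem (zero_notMem_idx N) _

lemma admissibleC_alignCoeff (M : IsMechanism q p) :
    admissibleC (idx N) X (alignCoeff N X q v) := by
  refine ⟨alignCoeff_zero, fun i hi => ?_⟩
  rw [alignCoeff, Set.indicator_of_mem hi]
  exact coeffAlong_mem_Icc (M.norm_alloc_le_one _) _

lemma alignCoeff_mul_dot_le (M : IsMechanism q p) {y : V k} (hy : ∀ t, 0 ≤ y t) (j : ℕ) :
    alignCoeff N X q v j * dot y (X j) ≤ dot y (q (v j)) := by
  by_cases hj : j ∈ idx N
  · rw [alignCoeff, Set.indicator_of_mem hj]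
    exact coeffAlong_mul_dot_le (M.alloc_nonneg _) hy
  · rw [alignCoeff, Set.indicator_of_notMem hj, zero_mul]
    exact dot_nonneg hy (M.alloc_nonneg _)

lemma aligned_payment_le_dot (M : IsMechanism q p) (hB : 1 ≤ B)
    (hX : ∀ i ∈ idx N, X i ≠ 0 ∧ ∀ t, 0 ≤ X i t)
    (hv : ∀ i, v i = (B ^ 2 ^ i / norm1 (X i)) • X i)
    {i j : ℕ} (hi : i ∈ idx N) (hpar : parallel (q (v i)) (v i)) (hj : j ∈ idx N ∨ j = 0)
    (hji : j < i) :
    p (v i) ≤ dot (v i) (alignCoeff N X q v i • X i - alignCoeff N X q v j • X j) +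
      B ^ 2 ^ i * slack B i := by
  set c := alignCoeff N X q v
  have hvnn : ∀ l ∈ idx N, ∀ t, 0 ≤ v l t := fun l hl =>
    hv l ▸ div_norm1_smul_nonneg (hX l hl).2 (by positivity)
  have hqi : q (v i) = c i • X i := by
    rw [show c i = coeffAlong (q (v i)) (X i) from Set.indicator_of_mem hi _]
    have hpar' : parallel (q (v i)) ((B ^ 2 ^ i / norm1 (X i)) • X i) := by rwa [← hv i]
    exact hpar'.eq_coeffAlong_smul (div_pos (by positivity) (norm1_pos (hX i hi).1)) (hX i hi).1
  rcases hj with hj | rfl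
  · have hcj : dot (v i) (c j • X j) ≤ dot (v i) (q (v j)) := by
      rw [dot_eq_dotProduct, dotProduct_smul, smul_eq_mul]
      exact alignCoeff_mul_dot_le M (hvnn i hi) j
    have hpj : p (v j) ≤ B ^ 2 ^ j := by
      have h := M.payment_le_norm1 (hvnn j hj)
      rwa [hv j, norm1_div_norm1_smul (hX j hj).1 (by positivity), ← hv j] at h
    calc p (v i) ≤ dot (v i) (q (v i) - c j • X j) + p (v j) :=
          M.payment_le_dot_sub_add (hvnn i hi) (hvnn j hj) hcj
      _ ≤ dot (v i) (c i • X i - c j • X j) + B ^ 2 ^ i * slack B i := by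
          rw [hqi]
          linarith [pow_two_pow_le_mul_slack hB hj.1 hji]
  · have hslack : 0 ≤ B ^ 2 ^ i * slack B i :=
      mul_nonneg (by positivity) (slack_nonneg (by positivity) i)
    rw [show c 0 = 0 from alignCoeff_zero, zero_smul, sub_zero, ← hqi]
    linarith [M.payment_le_dot (hvnn i hi)]

lemma aligned_payment_le (M : IsMechanism q p) (hB : 1 ≤ B)
    (hX : ∀ i ∈ idx N, X i ≠ 0 ∧ ∀ t, 0 ≤ X i t)
    (hv : ∀ i, v i = (B ^ 2 ^ i / norm1 (X i)) • X i)
    {i j : ℕ} (hi : i ∈ idx N) (hpar : parallel (q (v i)) (v i)) (hj : j ∈ idx N ∨ j = 0)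
    (hji : j < i) :
    (B ^ 2 ^ i)⁻¹ * p (v i) - slack B i ≤
      dot (X i) (alignCoeff N X q v i • X i - alignCoeff N X q v j • X j) / norm1 (X i) := by
  set z := alignCoeff N X q v i • X i - alignCoeff N X q v j • X j
  have hBi : 0 < B ^ 2 ^ i := by positivity
  have hscale : (B ^ 2 ^ i)⁻¹ * dot (v i) z = dot (X i) z / norm1 (X i) := by
    rw [hv i, dot_eq_dotProduct, smul_dotProduct, smul_eq_mul, ← dot_eq_dotProduct]
    field_simp
  rw [← hscale, sub_le_iff_le_add]
  calc (B ^ 2 ^ i)⁻¹ * p (v i)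
      ≤ (B ^ 2 ^ i)⁻¹ * (dot (v i) z + B ^ 2 ^ i * slack B i) :=
        mul_le_mul_of_nonneg_left (aligned_payment_le_dot M hB hX hv hi hpar hj hji)
          (inv_nonneg.2 hBi.le)
    _ = (B ^ 2 ^ i)⁻¹ * dot (v i) z + slack B i := by
        rw [mul_add, inv_mul_cancel_left₀ hBi.ne']

lemma aligned_revenue_term_le (M : IsMechanism q p) (hB : 1 ≤ B)
    (hX : ∀ i ∈ idx N, X i ≠ 0 ∧ ∀ t, 0 ≤ X i t)
    (hv : ∀ i, v i = (B ^ 2 ^ i / norm1 (X i)) • X i) (i : ℕ) :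
    (idx N).indicator (fun i =>
        ENNReal.ofReal ((B ^ (2 ^ i))⁻¹ * Set.indicator {u | parallel (q u) u} p (v i))) i ≤
      (idx N).indicator (fun i => ENNReal.ofReal
          (max 0 (sgapS (idx N) X (alignCoeff N X q v) i) / norm1 (X i))) i +
        ENNReal.ofReal (slack B i) := by
  by_cases hi : i ∈ idx N
  swap
  · rw [Set.indicator_of_notMem hi]
    exact zero_le
  rw [Set.indicator_of_mem hi, Set.indicator_of_mem hi]
  refine (ENNReal.ofReal_le_ofReal ?_).trans ENNReal.ofReal_add_le
  have hn : 0 < norm1 (X i) := norm1_pos (hX i hi).1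
  set g := sgapS (idx N) X (alignCoeff N X q v) i
  have hmax : g / norm1 (X i) ≤ max 0 g / norm1 (X i) :=
    div_le_div_of_nonneg_right (le_max_right 0 g) hn.le
  by_cases hpar : parallel (q (v i)) (v i)
  · rw [Set.indicator_of_mem (show v i ∈ {u | parallel (q u) u} from hpar)]
    have hgap : norm1 (X i) * ((B ^ 2 ^ i)⁻¹ * p (v i) - slack B i) ≤ g :=
      le_sgapS hi.1 fun j hj hji =>
        (le_div_iff₀' hn).1 (aligned_payment_le M hB hX hv hi hpar hj hji)
    linarith [(le_div_iff₀' hn).2 hgap]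
  · rw [Set.indicator_of_notMem (show v i ∉ {u | parallel (q u) u} from hpar), mul_zero]
    exact add_nonneg (div_nonneg (le_max_left 0 g) hn.le) (slack_nonneg (by linarith) i)

end AlignedRevenue

theorem stmt18 (k : ℕ) (B : ℝ) (hB : 4 ≤ B)
    (N : ℕ∞) (X : ℕ → V k)
    (hX : ∀ i ∈ idx N, X i ≠ 0 ∧ ∀ t, X i t ∈ Set.Icc (0:ℝ) 1)
    -- the scaled support points v_i := B^{2^i}·x_i/‖x_i‖₁
    (v : ℕ → V k) (hv : ∀ i, v i = (B ^ (2 ^ i) / norm1 (X i)) • X i)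
    -- an arbitrary incentive-compatible, individually rational mechanism
    (q : V k → V k) (p : V k → ℝ)
    (hq : ∀ u t, q u t ∈ Set.Icc (0:ℝ) 1)
    (hIC : ∀ u u' : V k, (∀ t, 0 ≤ u t) → (∀ t, 0 ≤ u' t) →
      dot u (q u') - p u' ≤ dot u (q u) - p u)
    (hIR : ∀ u : V k, (∀ t, 0 ≤ u t) → 0 ≤ dot u (q u) - p u) :
    -- aligned revenue of M on D is at most AlignGap(X) + 1/B
    (∑' i : ℕ, (idx N).indicator (fun i =>
        ENNReal.ofReal ((B ^ (2 ^ i))⁻¹ *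
          Set.indicator {u | parallel (q u) u} p (v i))) i) ≤
      (⨆ c : {c : ℕ → ℝ // admissibleC (idx N) X c}, alignGapE (idx N) X c.1) +
        ENNReal.ofReal (1 / B) := by
  have M : IsMechanism q p := ⟨hq, hIC, hIR⟩
  have hXnn : ∀ i ∈ idx N, X i ≠ 0 ∧ ∀ t, 0 ≤ X i t :=
    fun i hi => ⟨(hX i hi).1, fun t => ((hX i hi).2 t).1⟩
  calc _ ≤ ∑' i, ((idx N).indicator (fun i => ENNReal.ofReal
            (max 0 (sgapS (idx N) X (alignCoeff N X q v) i) / norm1 (X i))) i +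
          ENNReal.ofReal (slack B i)) :=
        ENNReal.tsum_le_tsum (aligned_revenue_term_le M (by linarith) hXnn hv)
    _ = alignGapE (idx N) X (alignCoeff N X q v) + ∑' i, ENNReal.ofReal (slack B i) :=
        ENNReal.tsum_add
    _ ≤ _ := add_le_add (le_iSup_of_le ⟨_, admissibleC_alignCoeff M⟩ le_rfl)
        (tsum_slack_le (by linarith))

end Stmt18
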